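/- arXiv:2408.04779 — 11 statements merged into one kernel-verified Lean document; each statement's English description precedes it below -/
import Mathlib

section
/- Let f : ℤ_p → ℤ_p be continuous and R : ℤ_p → ℤ_p a contraction with f ∘ R = id. Fix 0 < δ < Lip(R)⁻¹ − 1 and φ with Lip(φ) ≤ δ and ‖φ‖_∞ ≤ δ, and set g := f + φ. Then there exists a map R̃ : ℤ_p → ℤ_p such that g ∘ R̃ = id, R̃(ℤ_p) = R(ℤ_p), and Lip(R̃) ≤ Lip(R)/(1 − δ·Lip(R)) < 1. -/
open NNReal

/-!
Writing `g = f + φ`, the equation `g (R' x) = x` is solved by any fixed point `z = R (x - φ z)`,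
because `f ∘ R = id`. The map `z ↦ R (x - φ z)` is a contraction with constant `Lip(R) Lip(φ) < 1`,
so by Banach's theorem it has a unique fixed point `R' x`. Comparing the fixed-point equations at
`x` and `y` gives `(1 - Lip(R) Lip(φ)) ‖R' x - R' y‖ ≤ Lip(R) ‖x - y‖`; uniqueness of the fixed
point shows `R y = R' (y + φ (R y))`, whence `R'` and `R` have the same range.
-/

section PerturbedSection

variable {E : Type*} [NormedAddCommGroup E] {R φ : E → E} {KR Kφ : ℝ≥0}

lemma contractingWith_comp_const_sub (hR : LipschitzWith KR R) (hφ : LipschitzWith Kφ φ)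
    (hK : KR * Kφ < 1) (x : E) : ContractingWith (KR * Kφ) fun z => R (x - φ z) := by
  refine ⟨hK, lipschitzWith_iff_norm_sub_le.2 fun z w => ?_⟩
  calc ‖R (x - φ z) - R (x - φ w)‖ ≤ KR * ‖(x - φ z) - (x - φ w)‖ := hR.norm_sub_le _ _
    _ = KR * ‖φ z - φ w‖ := by rw [sub_sub_sub_cancel_left, norm_sub_rev]
    _ ≤ KR * (Kφ * ‖z - w‖) := by gcongr; exact hφ.norm_sub_le z w
    _ = ↑(KR * Kφ) * ‖z - w‖ := by push_cast; ring

lemma exists_forall_comp_sub_eq [CompleteSpace E] (hR : LipschitzWith KR R)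
    (hφ : LipschitzWith Kφ φ) (hK : KR * Kφ < 1) :
    ∃ S : E → E, ∀ x, R (x - φ (S x)) = S x :=
  ⟨fun x => (contractingWith_comp_const_sub hR hφ hK x).fixedPoint,
    fun x => (contractingWith_comp_const_sub hR hφ hK x).fixedPoint_isFixedPt⟩

lemma one_sub_mul_norm_sub_le_of_comp_sub_eq (hR : LipschitzWith KR R)
    (hφ : LipschitzWith Kφ φ) {x y z w : E} (hz : R (x - φ z) = z) (hw : R (y - φ w) = w) :
    (1 - KR * Kφ) * ‖z - w‖ ≤ KR * ‖x - y‖ := by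
  have h : ‖z - w‖ ≤ KR * ‖x - y‖ + KR * Kφ * ‖z - w‖ :=
    calc ‖z - w‖ = ‖R (x - φ z) - R (y - φ w)‖ := by rw [hz, hw]
      _ ≤ KR * ‖(x - y) - (φ z - φ w)‖ := by rw [sub_sub_sub_comm]; exact hR.norm_sub_le _ _
      _ ≤ KR * (‖x - y‖ + Kφ * ‖z - w‖) := by
          gcongr
          exact (norm_sub_le _ _).trans (by gcongr; exact hφ.norm_sub_le z w)
      _ = KR * ‖x - y‖ + KR * Kφ * ‖z - w‖ := by ring
  linarith

lemma eq_of_comp_sub_eq (hR : LipschitzWith KR R) (hφ : LipschitzWith Kφ φ)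
    (hK : KR * Kφ < 1) {x z w : E} (hz : R (x - φ z) = z) (hw : R (x - φ w) = w) : z = w := by
  have h := one_sub_mul_norm_sub_le_of_comp_sub_eq hR hφ hz hw
  rw [sub_self, norm_zero, mul_zero] at h
  have hK' : (0 : ℝ) < 1 - KR * Kφ := by rw [sub_pos]; exact_mod_cast hK
  exact sub_eq_zero.1 (norm_le_zero_iff.1 (nonpos_of_mul_nonpos_right h hK'))

lemma range_eq_of_forall_comp_sub_eq (hR : LipschitzWith KR R) (hφ : LipschitzWith Kφ φ)
    (hK : KR * Kφ < 1) {S : E → E} (hS : ∀ x, R (x - φ (S x)) = S x) :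
    Set.range S = Set.range R := by
  refine Set.Subset.antisymm ?_ ?_
  · rintro _ ⟨x, rfl⟩
    exact ⟨x - φ (S x), hS x⟩
  · rintro _ ⟨y, rfl⟩
    refine ⟨y + φ (R y), eq_of_comp_sub_eq hR hφ hK (hS _) ?_⟩
    rw [add_sub_cancel_right]

end PerturbedSection

theorem right_inverse_of_perturbation_general (p : ℕ) [Fact p.Prime]
    (f R φ : ℤ_[p] → ℤ_[p])
    (c : ℝ) (hc0 : 0 < c)
    (hRlip : ∀ x y : ℤ_[p], ‖R x - R y‖ ≤ c * ‖x - y‖)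
    (hfR : ∀ x : ℤ_[p], f (R x) = x)
    (δ : ℝ) (hδ0 : 0 < δ) (hδ : δ < c⁻¹ - 1)
    (hφlip : ∀ x y : ℤ_[p], ‖φ x - φ y‖ ≤ δ * ‖x - y‖) :
    ∃ R' : ℤ_[p] → ℤ_[p],
      (∀ x : ℤ_[p], f (R' x) + φ (R' x) = x) ∧
      Set.range R' = Set.range R ∧
      (∀ x y : ℤ_[p], ‖R' x - R' y‖ ≤ (c / (1 - δ * c)) * ‖x - y‖) ∧
      c / (1 - δ * c) < 1 := by
  have hδc : δ * c < 1 - c := by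
    have := mul_lt_mul_of_pos_right hδ hc0
    rwa [sub_mul, inv_mul_cancel₀ hc0.ne', one_mul] at this
  have hpos : 0 < 1 - δ * c := by linarith
  lift c to ℝ≥0 using hc0.le
  lift δ to ℝ≥0 using hδ0.le
  have hR : LipschitzWith c R := lipschitzWith_iff_norm_sub_le.2 hRlip
  have hφ : LipschitzWith δ φ := lipschitzWith_iff_norm_sub_le.2 hφlip
  have hK : c * δ < 1 := by rw [← NNReal.coe_lt_coe]; push_cast; linarith
  obtain ⟨S, hS⟩ := exists_forall_comp_sub_eq hR hφ hK
  refine ⟨S, fun x => ?_, range_eq_of_forall_comp_sub_eq hR hφ hK hS, fun x y => ?_, ?_⟩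
  · rw [← hS x, hfR, hS x, sub_add_cancel]
  · have h := one_sub_mul_norm_sub_le_of_comp_sub_eq hR hφ (hS x) (hS y)
    rw [div_mul_eq_mul_div, le_div_iff₀ hpos]
    linarith
  · rw [div_lt_one hpos]
    linarith

theorem right_inverse_of_perturbation (p : ℕ) [Fact p.Prime]
    (f R φ : ℤ_[p] → ℤ_[p]) (hf : Continuous f)
    (c : ℝ) (hc0 : 0 < c) (hc1 : c < 1)
    (hRlip : ∀ x y : ℤ_[p], ‖R x - R y‖ ≤ c * ‖x - y‖)
    (hfR : ∀ x : ℤ_[p], f (R x) = x)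
    (δ : ℝ) (hδ0 : 0 < δ) (hδ : δ < c⁻¹ - 1)
    (hφlip : ∀ x y : ℤ_[p], ‖φ x - φ y‖ ≤ δ * ‖x - y‖)
    (hφbd : ∀ x : ℤ_[p], ‖φ x‖ ≤ δ) :
    ∃ R' : ℤ_[p] → ℤ_[p],
      (∀ x : ℤ_[p], f (R' x) + φ (R' x) = x) ∧
      Set.range R' = Set.range R ∧
      (∀ x y : ℤ_[p], ‖R' x - R' y‖ ≤ (c / (1 - δ * c)) * ‖x - y‖) ∧
      c / (1 - δ * c) < 1 :=
  right_inverse_of_perturbation_general p f R φ c hc0 hRlip hfR δ hδ0 hδ hφlip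
end

section
/- Let f : ℤ_p → ℤ_p be continuous and suppose there is a family of contractions R_i : ℤ_p → ℤ_p (i in an index set I) with f ∘ R_i = id for each i and ⋃_{i∈I} R_i(ℤ_p) = ℤ_p. Then f has the shadowing property: for every ε > 0 there is δ > 0 such that every δ-pseudo-orbit of f is ε-shadowed by a true orbit of f. In fact, every δ-pseudo-orbit is (δ/2)-shadowed. -/
/-!
Through every point `x n` of the pseudo-orbit passes a section `g n = R (i n)` of `f`, and each
section is `p⁻¹`-Lipschitz because the norm of `ℤ_[p]` is discrete. Pulling `x N` back along
`g 0 ∘ ⋯ ∘ g (N - 1)` gives a Cauchy sequence; its limit `w` shadows the pseudo-orbit, since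
`f^[n]` of the `N`-th point is `x N` pulled back to time `n`, which the ultrametric inequality
keeps within `δ / p` of `x n`.
-/

open Filter Function NNReal

def composeFrom {α : Type*} (g : ℕ → α → α) : ℕ → ℕ → α → α
  | _, 0 => id
  | n, m + 1 => g n ∘ composeFrom g (n + 1) m

namespace composeFrom

variable {α : Type*} {g : ℕ → α → α}

@[simp]
lemma zero (n : ℕ) : composeFrom g n 0 = id := rfl

lemma succ (n m : ℕ) : composeFrom g n (m + 1) = g n ∘ composeFrom g (n + 1) m := rfl

lemma succ' (n m : ℕ) : composeFrom g n (m + 1) = composeFrom g n m ∘ g (n + m) := by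
  induction m generalizing n with
  | zero => rfl
  | succ m ih => rw [succ, ih, succ, add_right_comm, add_assoc]; rfl

lemma iterate_apply {f : α → α} (hfg : ∀ n, LeftInverse f (g n)) (n k m : ℕ) (v : α) :
    f^[k] (composeFrom g n (k + m) v) = composeFrom g (n + k) m v := by
  induction k generalizing n with
  | zero => simp
  | succ k ih =>
    rw [iterate_succ_apply, add_right_comm, succ, comp_apply, hfg, ih, add_assoc, add_comm 1 k]

lemma lipschitzWith [PseudoMetricSpace α] {K : ℝ≥0} (hg : ∀ n, LipschitzWith K (g n))
    (n m : ℕ) : LipschitzWith (K ^ m) (composeFrom g n m) := by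
  induction m generalizing n with
  | zero => simpa using LipschitzWith.id
  | succ m ih => rw [succ, pow_succ']; exact (hg n).comp (ih (n + 1))

end composeFrom

section Shadowing

variable {X : Type*} [PseudoMetricSpace X] [IsUltrametricDist X] {f : X → X} {g : ℕ → X → X}
  {K : ℝ≥0} {x : ℕ → X} {δ : ℝ}

/-- The ultrametric inequality keeps the errors of the pull-back from accumulating. -/
lemma dist_composeFrom_pseudoOrbit_le (hK : K ≤ 1) (hg : ∀ n, LipschitzWith K (g n))
    (hgx : ∀ n, g n (f (x n)) = x n) (hx : ∀ n, dist (f (x n)) (x (n + 1)) ≤ δ) (n m : ℕ) :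
    dist (composeFrom g n m (x (n + m))) (x n) ≤ K * δ := by
  have hδ : 0 ≤ δ := dist_nonneg.trans (hx 0)
  induction m generalizing n with
  | zero => simpa using by positivity
  | succ m ih =>
    set u := composeFrom g (n + 1) m (x (n + 1 + m))
    have hu : dist u (f (x n)) ≤ δ := by
      calc dist u (f (x n)) ≤ max (dist u (x (n + 1))) (dist (x (n + 1)) (f (x n))) :=
            IsUltrametricDist.dist_triangle_max _ _ _
        _ ≤ δ := max_le ((ih (n + 1)).trans (mul_le_of_le_one_left hδ hK))
            (dist_comm (f (x n)) _ ▸ hx n)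
    calc dist (composeFrom g n (m + 1) (x (n + (m + 1)))) (x n) = dist (g n u) (g n (f (x n))) := by
          rw [hgx, ← add_assoc, add_right_comm]; rfl
      _ ≤ K * δ := ((hg n).dist_le_mul _ _).trans (by gcongr)

theorem exists_shadowing_of_lipschitz_sections [CompleteSpace X] (hf : Continuous f)
    (hK : K < 1) (hg : ∀ n, LipschitzWith K (g n)) (hfg : ∀ n, LeftInverse f (g n))
    (hgx : ∀ n, g n (f (x n)) = x n) (hx : ∀ n, dist (f (x n)) (x (n + 1)) ≤ δ) :
    ∃ w, ∀ n, dist (x n) (f^[n] w) ≤ K * δ := by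
  set z : ℕ → X := fun N => composeFrom g 0 N (x N)
  have hz : CauchySeq z := by
    refine cauchySeq_of_le_geometric K (K * δ) hK fun N => ?_
    calc dist (z N) (z (N + 1))
        = dist (composeFrom g 0 N (g N (f (x N)))) (composeFrom g 0 N (g N (x (N + 1)))) := by
          simp only [z, hgx, composeFrom.succ', zero_add, comp_apply]
      _ ≤ K ^ N * (K * dist (f (x N)) (x (N + 1))) :=
          (composeFrom.lipschitzWith hg 0 N).dist_le_mul_of_le ((hg N).dist_le_mul _ _)
      _ ≤ K * δ * K ^ N := by
          rw [mul_comm]; gcongr; exact hx N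
  obtain ⟨w, hw⟩ := cauchySeq_tendsto_of_complete hz
  refine ⟨w, fun n => ?_⟩
  have hlim : Tendsto (fun m => dist (x n) (f^[n] (z (m + n)))) atTop
      (nhds (dist (x n) (f^[n] w))) :=
    tendsto_const_nhds.dist (((hf.iterate n).tendsto w).comp (hw.comp (tendsto_add_atTop_nat n)))
  refine le_of_tendsto hlim (Eventually.of_forall fun m => ?_)
  have hiter : f^[n] (z (m + n)) = composeFrom g n m (x (n + m)) := by
    simpa [z, add_comm m n] using composeFrom.iterate_apply hfg 0 n m (x (n + m))
  rw [hiter, dist_comm]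
  exact dist_composeFrom_pseudoOrbit_le hK.le hg hgx hx n m

end Shadowing

lemma exists_right_inverse_apply_eq {α ι : Type*} {f : α → α} {R : ι → α → α}
    (hright : ∀ i x, f (R i x) = x) (hcover : (⋃ i, Set.range (R i)) = Set.univ) (y : α) :
    ∃ i, R i (f y) = y := by
  obtain ⟨i, u, rfl⟩ := Set.mem_iUnion.mp (hcover ▸ Set.mem_univ y)
  exact ⟨i, by rw [hright]⟩

namespace PadicInt

variable {p : ℕ} [Fact p.Prime]

/-- The norm on `ℤ_[p]` takes values in `{0} ∪ p ^ ℤ`. -/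
lemma norm_le_div_of_norm_lt {u v : ℤ_[p]} (h : ‖u‖ < ‖v‖) : ‖u‖ ≤ ‖v‖ / p := by
  have hv : v ≠ 0 := norm_pos_iff.mp ((norm_nonneg u).trans_lt h)
  rw [norm_eq_zpow_neg_valuation hv] at h ⊢
  rw [div_eq_mul_inv, ← zpow_sub_one₀ (by exact_mod_cast (Fact.out : p.Prime).ne_zero)]
  exact (norm_lt_pow_iff_norm_le_pow_sub_one u _).mp h

lemma lipschitzWith_inv_of_contraction {h : ℤ_[p] → ℤ_[p]} {c : ℝ} (hc : c < 1)
    (hch : ∀ x y, ‖h x - h y‖ ≤ c * ‖x - y‖) : LipschitzWith (p : ℝ≥0)⁻¹ h := by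
  refine LipschitzWith.of_dist_le_mul fun x y => ?_
  rcases eq_or_ne x y with rfl | hxy
  · simp
  have hpos : 0 < ‖x - y‖ := norm_pos_iff.mpr (sub_ne_zero.mpr hxy)
  have hlt : ‖h x - h y‖ < ‖x - y‖ := (hch x y).trans_lt (by nlinarith)
  simpa [dist_eq_norm, div_eq_inv_mul] using norm_le_div_of_norm_lt hlt

end PadicInt

theorem shadowing_from_right_inverse_contractions (p : ℕ) [Fact p.Prime]
    {I : Type*} (f : ℤ_[p] → ℤ_[p]) (hf : Continuous f)
    (R : I → ℤ_[p] → ℤ_[p])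
    (hcontr : ∀ i : I, ∃ c : ℝ, c < 1 ∧ ∀ x y : ℤ_[p], ‖R i x - R i y‖ ≤ c * ‖x - y‖)
    (hright : ∀ (i : I) (x : ℤ_[p]), f (R i x) = x)
    (hcover : (⋃ i : I, Set.range (R i)) = Set.univ) :
    (∀ ε > (0 : ℝ), ∃ δ > (0 : ℝ), ∀ x : ℕ → ℤ_[p],
        (∀ n : ℕ, ‖f (x n) - x (n + 1)‖ ≤ δ) →
        ∃ z : ℤ_[p], ∀ n : ℕ, ‖x n - f^[n] z‖ ≤ ε) ∧
    (∀ δ > (0 : ℝ), ∀ x : ℕ → ℤ_[p],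
        (∀ n : ℕ, ‖f (x n) - x (n + 1)‖ ≤ δ) →
        ∃ z : ℤ_[p], ∀ n : ℕ, ‖x n - f^[n] z‖ ≤ δ / 2) := by
  have hlip (i : I) : LipschitzWith (p : ℝ≥0)⁻¹ (R i) := by
    obtain ⟨c, hc, hcR⟩ := hcontr i
    exact PadicInt.lipschitzWith_inv_of_contraction hc hcR
  have hp : (2 : ℝ) ≤ p := mod_cast (Fact.out : p.Prime).two_le
  have half_shadowing : ∀ δ > (0 : ℝ), ∀ x : ℕ → ℤ_[p],
      (∀ n : ℕ, ‖f (x n) - x (n + 1)‖ ≤ δ) →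
      ∃ z : ℤ_[p], ∀ n : ℕ, ‖x n - f^[n] z‖ ≤ δ / 2 := by
    intro δ _ x hx
    choose idx hidx using fun n => exists_right_inverse_apply_eq hright hcover (x n)
    obtain ⟨w, hw⟩ := exists_shadowing_of_lipschitz_sections (g := fun n => R (idx n)) hf
      (inv_lt_one_of_one_lt₀ (by exact_mod_cast (Fact.out : p.Prime).one_lt))
      (fun n => hlip (idx n)) (fun n => hright (idx n)) hidx (by simpa [dist_eq_norm] using hx)
    refine ⟨w, fun n => ?_⟩
    rw [← dist_eq_norm]
    calc dist (x n) (f^[n] w) ≤ (p : ℝ)⁻¹ * δ := by simpa using hw n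
      _ ≤ δ / 2 := by rw [inv_mul_eq_div]; gcongr
  exact ⟨fun ε hε => ⟨ε, hε, fun x hx => (half_shadowing ε hε x hx).imp
    fun _ hz n => (hz n).trans (by linarith)⟩, half_shadowing⟩
end

section
/- Let f : ℤ_p → ℤ_p be continuous and let R_i : ℤ_p → ℤ_p, i ∈ I, be a family of contractions with f ∘ R_i = id, whose images cover ℤ_p. Suppose (x_n)_{n∈ℕ} is a bounded δ-pseudo-orbit of f, and for each n choose i_n ∈ I with R_{i_n}(f(x_n)) = x_n. Then the map F on bounded sequences in ℤ_p given by F((u_n)_n) = (R_{i_n}(x_{n+1} + u_{n+1}) − x_n)_n is a contraction on the complete space of bounded sequences with the supremum norm, and its unique fixed point (z_n)_n satisfies ‖z_n‖_p ≤ δ/2 for all n and fⁿ(x_0 + z_0) = x_n + z_n for every n ∈ ℕ. -/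
/-! Norms on `ℤ_[p]` take values in `{0} ∪ p ^ ℤ`, so every contraction of `ℤ_[p]` is in fact
`p⁻¹`-Lipschitz. The `n`-th coordinate of `F u` depends only on `u (n + 1)`, through `R (idx n)`,
so `F` is a `p⁻¹`-contraction of `ℕ →ᵤ ℤ_[p]` and Banach's theorem gives its fixed point `z`.
Being fixed means `x n + z n = R (idx n) (x (n + 1) + z (n + 1))`; applying `f` shows that
`x + z` is an orbit. Comparing with `x n = R (idx n) (f (x n))` in the ultrametric norm gives
`‖z n‖ ≤ p⁻¹ * max δ ‖z (n + 1)‖`, and taking suprema yields `‖z n‖ ≤ δ / p ≤ δ / 2`. -/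

open scoped UniformConvergence

theorem exists_unique_fixedPoint_of_dist_le_mul_iSup {α X : Type*} [MetricSpace X]
    [CompleteSpace X] [BoundedSpace X] [Nonempty X] (G : (α → X) → α → X) {K : ℝ} (hK : K < 1)
    (hG : ∀ u v a, dist (G u a) (G v a) ≤ K * ⨆ b, dist (u b) (v b)) :
    ∃! z, G z = z := by
  let Gᵤ : (α →ᵤ X) → α →ᵤ X := fun u ↦ UniformFun.ofFun (G (UniformFun.toFun u))
  have hcontr : ContractingWith K.toNNReal Gᵤ := by
    refine ⟨Real.toNNReal_lt_one.mpr hK, LipschitzWith.of_dist_le_mul fun u v ↦ ?_⟩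
    refine (UniformFun.dist_le (by positivity)).mpr fun a ↦ (hG _ _ a).trans ?_
    exact mul_le_mul_of_nonneg_right (Real.le_coe_toNNReal K)
      (Real.iSup_nonneg fun _ ↦ dist_nonneg)
  have : Nonempty (α →ᵤ X) := ⟨UniformFun.ofFun fun _ ↦ Classical.arbitrary X⟩
  exact ⟨_, hcontr.fixedPoint_isFixedPt,
    fun w hw ↦ hcontr.fixedPoint_unique (x := UniformFun.ofFun w) hw⟩

theorem le_mul_of_le_mul_max_succ {s : ℕ → ℝ} (hs : BddAbove (Set.range s)) {c δ : ℝ}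
    (hc₀ : 0 ≤ c) (hc₁ : c < 1) (hδ : 0 ≤ δ) (h : ∀ n, s n ≤ c * max δ (s (n + 1))) (n : ℕ) :
    s n ≤ c * δ := by
  have hS : ⨆ m, s m ≤ c * max δ (⨆ m, s m) :=
    ciSup_le fun m ↦ (h m).trans <| by gcongr; exact le_ciSup hs _
  rcases le_total (⨆ m, s m) δ with hSδ | hδS
  · simpa [max_eq_left ((le_ciSup hs (n + 1)).trans hSδ)] using h n
  · rw [max_eq_right hδS] at hS
    have hS₀ : ⨆ m, s m ≤ 0 := by nlinarith
    nlinarith [le_ciSup hs n]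

theorem Function.iterate_eq_of_map_eq_succ {X : Type*} {f : X → X} {y : ℕ → X}
    (h : ∀ n, f (y n) = y (n + 1)) (n : ℕ) : f^[n] (y 0) = y n := by
  induction n with
  | zero => rfl
  | succ n ih => rw [Function.iterate_succ_apply', ih, h]

namespace PadicInt

variable {p : ℕ} [Fact p.Prime]

theorem norm_le_inv_mul_of_norm_lt {a b : ℤ_[p]} (h : ‖a‖ < ‖b‖) : ‖a‖ ≤ (p : ℝ)⁻¹ * ‖b‖ := by
  have hb : b ≠ 0 := norm_pos_iff.mp ((norm_nonneg a).trans_lt h)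
  rw [norm_eq_zpow_neg_valuation hb] at h ⊢
  rw [← zpow_neg_one, ← zpow_add₀ (by exact_mod_cast (Fact.out : p.Prime).ne_zero)]
  exact (norm_le_pow_iff_norm_lt_pow_add_one a _).mpr (by simpa using h)

theorem bddAbove_range_norm {α : Type*} (u : α → ℤ_[p]) : BddAbove (Set.range fun a ↦ ‖u a‖) :=
  ⟨1, Set.forall_mem_range.mpr fun a ↦ norm_le_one (u a)⟩

theorem norm_sub_le_inv_mul_of_contraction {g : ℤ_[p] → ℤ_[p]} {c : ℝ} (hc : c < 1)
    (hg : ∀ x y, ‖g x - g y‖ ≤ c * ‖x - y‖) (x y : ℤ_[p]) :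
    ‖g x - g y‖ ≤ (p : ℝ)⁻¹ * ‖x - y‖ := by
  rcases eq_or_ne x y with rfl | hxy
  · simp
  refine norm_le_inv_mul_of_norm_lt ((hg x y).trans_lt ?_)
  exact mul_lt_of_lt_one_left (norm_pos_iff.mpr (sub_ne_zero.mpr hxy)) hc

end PadicInt

theorem fixed_point_operator_shadowing_general (p : ℕ) [Fact p.Prime]
    {I : Type*} (f : ℤ_[p] → ℤ_[p])
    (R : I → ℤ_[p] → ℤ_[p])
    (hcontr : ∀ i : I, ∃ c : ℝ, c < 1 ∧ ∀ x y : ℤ_[p], ‖R i x - R i y‖ ≤ c * ‖x - y‖)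
    (hright : ∀ (i : I) (x : ℤ_[p]), f (R i x) = x)
    (δ : ℝ) (x : ℕ → ℤ_[p])
    (hpseudo : ∀ n : ℕ, ‖f (x n) - x (n + 1)‖ ≤ δ)
    (idx : ℕ → I) (hidx : ∀ n : ℕ, R (idx n) (f (x n)) = x n)
    (F : (ℕ → ℤ_[p]) → ℕ → ℤ_[p])
    (hF : ∀ (u : ℕ → ℤ_[p]) (n : ℕ), F u n = R (idx n) (x (n + 1) + u (n + 1)) - x n) :
    (∃ c : ℝ, c < 1 ∧ ∀ u v : ℕ → ℤ_[p], ∀ n : ℕ,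
        ‖F u n - F v n‖ ≤ c * ⨆ m : ℕ, ‖u m - v m‖) ∧
    ∃ z : ℕ → ℤ_[p], F z = z ∧ (∀ w : ℕ → ℤ_[p], F w = w → w = z) ∧
      (∀ n : ℕ, ‖z n‖ ≤ δ / 2) ∧
      (∀ n : ℕ, f^[n] (x 0 + z 0) = x n + z n) := by
  have hp : (2 : ℝ) ≤ p := by exact_mod_cast (Fact.out : p.Prime).two_le
  have hc₁ : (p : ℝ)⁻¹ < 1 := inv_lt_one_of_one_lt₀ (by linarith)
  have hR i : ∀ a b, ‖R i a - R i b‖ ≤ (p : ℝ)⁻¹ * ‖a - b‖ := by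
    obtain ⟨c, hc, hRc⟩ := hcontr i
    exact PadicInt.norm_sub_le_inv_mul_of_contraction hc hRc
  have hF_lip u v n : ‖F u n - F v n‖ ≤ (p : ℝ)⁻¹ * ⨆ m, ‖u m - v m‖ := by
    rw [hF, hF, sub_sub_sub_cancel_right]
    refine (hR _ _ _).trans (mul_le_mul_of_nonneg_left ?_ (by positivity))
    rw [add_sub_add_left_eq_sub]
    exact le_ciSup (f := fun m ↦ ‖u m - v m‖) (PadicInt.bddAbove_range_norm _) (n + 1)
  obtain ⟨z, hz, hz_unique⟩ := exists_unique_fixedPoint_of_dist_le_mul_iSup F hc₁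
    (by simpa only [dist_eq_norm] using hF_lip)
  have hz_succ n : x n + z n = R (idx n) (x (n + 1) + z (n + 1)) := by
    rw [← congrFun hz n, hF]; abel
  refine ⟨⟨_, hc₁, hF_lip⟩, z, hz, hz_unique, fun n ↦ ?_, ?_⟩
  · have hz_le n : ‖z n‖ ≤ (p : ℝ)⁻¹ * max δ ‖z (n + 1)‖ := by
      calc ‖z n‖ = ‖R (idx n) (x (n + 1) + z (n + 1)) - R (idx n) (f (x n))‖ := by
            rw [hidx, ← hz_succ, add_sub_cancel_left]
        _ ≤ (p : ℝ)⁻¹ * ‖(x (n + 1) - f (x n)) + z (n + 1)‖ := by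
            rw [sub_add_eq_add_sub]; exact hR _ _ _
        _ ≤ (p : ℝ)⁻¹ * max δ ‖z (n + 1)‖ := by
            gcongr
            refine (PadicInt.nonarchimedean _ _).trans (max_le_max ?_ le_rfl)
            rw [norm_sub_rev]; exact hpseudo n
    have hδ : 0 ≤ δ := (norm_nonneg _).trans (hpseudo 0)
    calc ‖z n‖ ≤ (p : ℝ)⁻¹ * δ :=
          le_mul_of_le_mul_max_succ (PadicInt.bddAbove_range_norm _) (by positivity) hc₁ hδ
            hz_le n
      _ ≤ δ / 2 := by
          rw [inv_mul_eq_div]; exact div_le_div_of_nonneg_left hδ two_pos hp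
  · exact Function.iterate_eq_of_map_eq_succ (y := fun n ↦ x n + z n) fun n ↦ by
      rw [hz_succ, hright]

theorem fixed_point_operator_shadowing (p : ℕ) [Fact p.Prime]
    {I : Type*} (f : ℤ_[p] → ℤ_[p]) (hf : Continuous f)
    (R : I → ℤ_[p] → ℤ_[p])
    (hcontr : ∀ i : I, ∃ c : ℝ, c < 1 ∧ ∀ x y : ℤ_[p], ‖R i x - R i y‖ ≤ c * ‖x - y‖)
    (hright : ∀ (i : I) (x : ℤ_[p]), f (R i x) = x)
    (hcover : (⋃ i : I, Set.range (R i)) = Set.univ)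
    (δ : ℝ) (hδ : 0 < δ) (x : ℕ → ℤ_[p])
    (hpseudo : ∀ n : ℕ, ‖f (x n) - x (n + 1)‖ ≤ δ)
    (idx : ℕ → I) (hidx : ∀ n : ℕ, R (idx n) (f (x n)) = x n)
    (F : (ℕ → ℤ_[p]) → ℕ → ℤ_[p])
    (hF : ∀ (u : ℕ → ℤ_[p]) (n : ℕ), F u n = R (idx n) (x (n + 1) + u (n + 1)) - x n) :
    (∃ c : ℝ, c < 1 ∧ ∀ u v : ℕ → ℤ_[p], ∀ n : ℕ,
        ‖F u n - F v n‖ ≤ c * ⨆ m : ℕ, ‖u m - v m‖) ∧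
    ∃ z : ℕ → ℤ_[p], F z = z ∧ (∀ w : ℕ → ℤ_[p], F w = w → w = z) ∧
      (∀ n : ℕ, ‖z n‖ ≤ δ / 2) ∧
      (∀ n : ℕ, f^[n] (x 0 + z 0) = x n + z n) :=
  fixed_point_operator_shadowing_general p f R hcontr hright δ x hpseudo idx hidx F hF
end

section
/- Every (p^{-k}, p^k)-locally scaling map f : ℤ_p → ℤ_p (k ≥ 1) can be written as f = S^k ∘ w, where S is the shift map on ℤ_p and w : ℤ_p → ℤ_p is a bijective isometry. -/
/-!
Put `w x = p ^ k * f x + (x mod p ^ k)`, i.e. prepend the first `k` digits of `x` to the digits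
of `f x`; then `S^[k] ∘ w = f`. For `‖x - y‖ ≤ p⁻ᵏ` the residues agree and the factor `p ^ k`
cancels the scaling of `f`; for `‖x - y‖ > p⁻ᵏ` the residues already differ by exactly
`‖x - y‖`, which dominates the `p ^ k * (f x - f y)` term. So `w` is an isometry of the compact
space `ℤ_p` into itself, hence bijective.
-/

open Function

theorem Isometry.iterate {X : Type*} [PseudoEMetricSpace X] {f : X → X} (hf : Isometry f)
    (n : ℕ) : Isometry f^[n] := by
  induction n with
  | zero => exact isometry_id
  | succ n ih => rw [iterate_succ']; exact hf.comp ih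

theorem Isometry.surjective_of_compactSpace {X : Type*} [MetricSpace X] [CompactSpace X]
    {f : X → X} (hf : Isometry f) : Surjective f := by
  intro z
  by_contra hz
  obtain ⟨ε, hε, hball⟩ := Metric.isOpen_iff.mp
    (isCompact_range hf.continuous).isClosed.isOpen_compl z hz
  -- the orbit of `z` stays `ε`-separated, which compactness forbids
  have hsep : ∀ m n, m < n → ε ≤ dist (f^[m] z) (f^[n] z) := by
    intro m n hmn
    obtain ⟨j, rfl⟩ := Nat.exists_eq_add_of_lt hmn
    rw [add_assoc, iterate_add_apply, (hf.iterate m).dist_eq, iterate_succ_apply']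
    exact not_lt.mp fun h => hball (Metric.mem_ball'.mpr h) ⟨_, rfl⟩
  obtain ⟨a, φ, hφ, hlim⟩ := CompactSpace.tendsto_subseq (fun n => f^[n] z)
  obtain ⟨N, hN⟩ := Metric.cauchySeq_iff'.mp hlim.cauchySeq ε hε
  exact (hsep _ _ (hφ N.lt_succ_self)).not_gt (by simpa [dist_comm] using hN (N + 1) N.le_succ)

theorem IsUltrametricDist.norm_add_eq_left_of_norm_lt {E : Type*} [SeminormedAddCommGroup E]
    [IsUltrametricDist E] {a b : E} (h : ‖b‖ < ‖a‖) : ‖a + b‖ = ‖a‖ := by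
  rw [norm_add_eq_max_of_norm_ne_norm h.ne', max_eq_left h.le]

namespace PadicInt

variable {p : ℕ} [Fact p.Prime]

theorem toZModPow_eq_iff_norm_sub_le {n : ℕ} {x y : ℤ_[p]} :
    toZModPow n x = toZModPow n y ↔ ‖x - y‖ ≤ (p : ℝ) ^ (-n : ℤ) := by
  rw [norm_le_pow_iff_mem_span_pow, ← ker_toZModPow, RingHom.mem_ker, map_sub, sub_eq_zero]

theorem val_toZModPow (n : ℕ) (x : ℤ_[p]) : (toZModPow n x).val = x.appr n :=
  ZMod.val_cast_of_lt (appr_lt x n)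

theorem appr_natCast_of_lt {n c : ℕ} (hc : c < p ^ n) : (c : ℤ_[p]).appr n = c := by
  rw [← val_toZModPow, map_natCast, ZMod.val_cast_of_lt hc]

theorem appr_eq_appr_of_norm_sub_le {n : ℕ} {x y : ℤ_[p]} (h : ‖x - y‖ ≤ (p : ℝ) ^ (-n : ℤ)) :
    x.appr n = y.appr n := by
  rw [← val_toZModPow, ← val_toZModPow, toZModPow_eq_iff_norm_sub_le.mpr h]

theorem norm_appr_sub_appr_of_lt_norm_sub {n : ℕ} {x y : ℤ_[p]}
    (h : (p : ℝ) ^ (-n : ℤ) < ‖x - y‖) : ‖(x.appr n : ℤ_[p]) - y.appr n‖ = ‖x - y‖ := by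
  have herr : ‖(y - y.appr n) - (x - x.appr n)‖ ≤ (p : ℝ) ^ (-n : ℤ) :=
    (norm_le_pow_iff_mem_span_pow _ n).mpr (Ideal.sub_mem _ (appr_spec n y) (appr_spec n x))
  rw [← IsUltrametricDist.norm_add_eq_left_of_norm_lt (herr.trans_lt h)]
  ring_nf

theorem norm_pow_mul_le (n : ℕ) (x : ℤ_[p]) : ‖(p : ℤ_[p]) ^ n * x‖ ≤ (p : ℝ) ^ (-n : ℤ) := by
  rw [norm_le_pow_iff_mem_span_pow, Ideal.mem_span_singleton]
  exact dvd_mul_right _ _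

theorem norm_pow_mul (n : ℕ) (x : ℤ_[p]) : ‖(p : ℤ_[p]) ^ n * x‖ = (p : ℝ) ^ (-n : ℤ) * ‖x‖ := by
  rw [norm_mul, norm_pow, norm_p, zpow_neg, zpow_natCast, inv_pow]

/-- The digits of `shiftLift k f x` are the first `k` digits of `x` followed by those of `f x`. -/
noncomputable def shiftLift (k : ℕ) (f : ℤ_[p] → ℤ_[p]) (x : ℤ_[p]) : ℤ_[p] :=
  p ^ k * f x + x.appr k

section Shift

variable {S : ℤ_[p] → ℤ_[p]}
  (hS : ∀ x : ℤ_[p], (p : ℤ_[p]) * S x = x - ((x.appr 1 : ℕ) : ℤ_[p]))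
include hS

theorem shift_mul_add_natCast (y : ℤ_[p]) {c : ℕ} (hc : c < p) : S (p * y + c) = y := by
  have happr : ((p : ℤ_[p]) * y + c).appr 1 = c := by
    rw [appr_eq_appr_of_norm_sub_le (y := c) (by simpa using norm_pow_mul_le 1 y),
      appr_natCast_of_lt (by simpa using hc)]
  apply mul_left_cancel₀ (Nat.cast_ne_zero.mpr (NeZero.ne p) : (p : ℤ_[p]) ≠ 0)
  rw [hS, happr]
  ring

theorem iterate_shift_pow_mul_add_natCast (k : ℕ) (y : ℤ_[p]) {c : ℕ} (hc : c < p ^ k) :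
    S^[k] (p ^ k * y + c) = y := by
  induction k generalizing c with
  | zero => simp_all
  | succ k ih =>
    have hdigit :
        (p : ℤ_[p]) ^ (k + 1) * y + c = p * (p ^ k * y + (c / p : ℕ)) + (c % p : ℕ) := by
      conv_lhs => rw [← Nat.div_add_mod c p]
      push_cast
      ring
    rw [iterate_succ_apply, hdigit, shift_mul_add_natCast hS _ (Nat.mod_lt _ (NeZero.pos p))]
    exact ih (Nat.div_lt_of_lt_mul (by rwa [pow_succ'] at hc))

theorem iterate_shift_shiftLift (k : ℕ) (f : ℤ_[p] → ℤ_[p]) (x : ℤ_[p]) :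
    S^[k] (shiftLift k f x) = f x :=
  iterate_shift_pow_mul_add_natCast hS k (f x) (appr_lt x k)

end Shift

theorem norm_shiftLift_sub {k : ℕ} {f : ℤ_[p] → ℤ_[p]}
    (hscal : ∀ x y : ℤ_[p], ‖x - y‖ ≤ (p : ℝ) ^ (-(k : ℤ)) →
      ‖f x - f y‖ = (p : ℝ) ^ (k : ℤ) * ‖x - y‖) (x y : ℤ_[p]) :
    ‖shiftLift k f x - shiftLift k f y‖ = ‖x - y‖ := by
  rcases le_or_gt ‖x - y‖ ((p : ℝ) ^ (-(k : ℤ))) with hclose | hfar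
  · have hdiff : shiftLift k f x - shiftLift k f y = p ^ k * (f x - f y) := by
      simp only [shiftLift, appr_eq_appr_of_norm_sub_le hclose]
      ring
    have hp : (p : ℝ) ≠ 0 := Nat.cast_ne_zero.mpr (NeZero.ne p)
    rw [hdiff, norm_pow_mul, hscal x y hclose, ← mul_assoc, ← zpow_add₀ hp, neg_add_cancel,
      zpow_zero, one_mul]
  · have hdiff : shiftLift k f x - shiftLift k f y =
        ((x.appr k : ℤ_[p]) - y.appr k) + p ^ k * (f x - f y) := by
      simp only [shiftLift]
      ring
    have hsmall : ‖(p : ℤ_[p]) ^ k * (f x - f y)‖ < ‖(x.appr k : ℤ_[p]) - y.appr k‖ := by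
      rw [norm_appr_sub_appr_of_lt_norm_sub hfar]
      exact (norm_pow_mul_le k _).trans_lt hfar
    rw [hdiff, IsUltrametricDist.norm_add_eq_left_of_norm_lt hsmall,
      norm_appr_sub_appr_of_lt_norm_sub hfar]

end PadicInt

theorem locally_scaling_decomposition_general (p : ℕ) [Fact p.Prime]
    (S : ℤ_[p] → ℤ_[p])
    (hS : ∀ x : ℤ_[p], (p : ℤ_[p]) * S x = x - ((x.appr 1 : ℕ) : ℤ_[p]))
    (k : ℕ) (f : ℤ_[p] → ℤ_[p])
    (hscal : ∀ x y : ℤ_[p], ‖x - y‖ ≤ (p : ℝ) ^ (-(k : ℤ)) →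
      ‖f x - f y‖ = (p : ℝ) ^ (k : ℤ) * ‖x - y‖) :
    ∃ w : ℤ_[p] → ℤ_[p], Function.Bijective w ∧
      (∀ x y : ℤ_[p], ‖w x - w y‖ = ‖x - y‖) ∧
      f = S^[k] ∘ w := by
  have hw := PadicInt.norm_shiftLift_sub hscal
  have hiso : Isometry (PadicInt.shiftLift k f) :=
    Isometry.of_dist_eq fun x y => by simpa only [dist_eq_norm] using hw x y
  refine ⟨PadicInt.shiftLift k f, ⟨hiso.injective, hiso.surjective_of_compactSpace⟩, hw, ?_⟩
  funext x
  exact (PadicInt.iterate_shift_shiftLift hS k f x).symm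

theorem locally_scaling_decomposition (p : ℕ) [Fact p.Prime]
    (S : ℤ_[p] → ℤ_[p])
    (hS : ∀ x : ℤ_[p], (p : ℤ_[p]) * S x = x - ((x.appr 1 : ℕ) : ℤ_[p]))
    (k : ℕ) (hk : 1 ≤ k) (f : ℤ_[p] → ℤ_[p])
    (hscal : ∀ x y : ℤ_[p], ‖x - y‖ ≤ (p : ℝ) ^ (-(k : ℤ)) →
      ‖f x - f y‖ = (p : ℝ) ^ (k : ℤ) * ‖x - y‖) :
    ∃ w : ℤ_[p] → ℤ_[p], Function.Bijective w ∧
      (∀ x y : ℤ_[p], ‖w x - w y‖ = ‖x - y‖) ∧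
      f = S^[k] ∘ w :=
  locally_scaling_decomposition_general p S hS k f hscal
end

section
/- Let R : ℤ_p → ℤ_p be a bi-Lipschitz contraction (c₁·‖x−y‖_p ≤ ‖R(x)−R(y)‖_p ≤ c₂·‖x−y‖_p, 0 < c₁ ≤ c₂ < 1) whose image R(ℤ_p) is ρ-open for some ρ > 0 (i.e. the ball B(x, ρ) ⊆ R(ℤ_p) for every x ∈ R(ℤ_p)). Then for every 0 < δ ≤ min{c₁/2, ρ/2} and every φ with Lip(φ) ≤ δ and ‖φ‖_∞ ≤ δ, the map T = R + φ satisfies T(ℤ_p) = R(ℤ_p). -/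
theorem perturbed_image_eq (p : ℕ) [Fact p.Prime]
    (R φ : ℤ_[p] → ℤ_[p]) (c₁ c₂ : ℝ)
    (hc₁ : 0 < c₁) (hc₁₂ : c₁ ≤ c₂) (hc₂ : c₂ < 1)
    (hR : ∀ x y : ℤ_[p], c₁ * ‖x - y‖ ≤ ‖R x - R y‖ ∧ ‖R x - R y‖ ≤ c₂ * ‖x - y‖)
    (ρ : ℝ) (hρ : 0 < ρ)
    (hopen : ∀ y ∈ Set.range R, ∀ z : ℤ_[p], ‖z - y‖ ≤ ρ → z ∈ Set.range R)
    (δ : ℝ) (hδ0 : 0 < δ) (hδ : δ ≤ min (c₁ / 2) (ρ / 2))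
    (hφlip : ∀ x y : ℤ_[p], ‖φ x - φ y‖ ≤ δ * ‖x - y‖)
    (hφbd : ∀ x : ℤ_[p], ‖φ x‖ ≤ δ) :
    Set.range (fun x : ℤ_[p] => R x + φ x) = Set.range R := by
  have hδρ : δ ≤ ρ := (hδ.trans (min_le_right _ _)).trans (by linarith)
  have hδc : δ ≤ c₁ / 2 := hδ.trans (min_le_left _ _)
  apply Set.eq_of_subset_of_subset
  · rintro _ ⟨x, rfl⟩
    refine hopen (R x) ⟨x, rfl⟩ _ ?_
    have : R x + φ x - R x = φ x := by ring
    rw [this]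
    exact (hφbd x).trans hδρ
  · rintro _ ⟨a, rfl⟩
    have hmem : ∀ x : ℤ_[p], R a - φ x ∈ Set.range R := by
      intro x
      apply hopen (R a) ⟨a, rfl⟩
      have h : R a - φ x - R a = -φ x := by ring
      rw [h, norm_neg]
      exact (hφbd x).trans hδρ
    set S : ℤ_[p] → ℤ_[p] := fun x => (hmem x).choose with hSdef
    have hSspec : ∀ x, R (S x) = R a - φ x := fun x => (hmem x).choose_spec
    have hlip : LipschitzWith (1/2) S := by
      apply LipschitzWith.of_dist_le_mul
      intro x y
      rw [dist_eq_norm, dist_eq_norm]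
      have h1 := (hR (S x) (S y)).1
      have h2 : ‖R (S x) - R (S y)‖ = ‖φ y - φ x‖ := by
        rw [hSspec x, hSspec y]; ring_nf
      have h3 : ‖φ y - φ x‖ ≤ δ * ‖x - y‖ := by
        rw [show ‖x - y‖ = ‖y - x‖ from (norm_sub_rev _ _)]
        exact hφlip y x
      have hn : (0:ℝ) ≤ ‖x - y‖ := norm_nonneg _
      have : c₁ * ‖S x - S y‖ ≤ (c₁/2) * ‖x - y‖ := by
        calc c₁ * ‖S x - S y‖ ≤ ‖φ y - φ x‖ := by rw [← h2]; exact h1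
          _ ≤ δ * ‖x - y‖ := h3
          _ ≤ (c₁/2) * ‖x - y‖ := by nlinarith
      have hhalf : ((1/2 : NNReal) : ℝ) = (1/2 : ℝ) := by norm_num
      rw [hhalf]
      nlinarith
    have hC : ContractingWith (1/2) S := ⟨by exact_mod_cast (by norm_num : (1:ℝ)/2 < 1), hlip⟩
    obtain ⟨x, hx, -⟩ := hC.exists_fixedPoint 0 (edist_ne_top _ _)
    refine ⟨x, ?_⟩
    have := hSspec x
    rw [hx] at this
    simp only []
    rw [this]; ring
end

section
/- Let R : ℤ_p → ℤ_p be a scaling bi-Lipschitz contraction, i.e. there exists κ : {pⁿ : n ∈ ℤ} → {pⁿ : n ∈ ℤ} with ‖R(x)−R(y)‖_p = κ(‖x−y‖_p) for all x ≠ y, and c₁‖x−y‖_p ≤ ‖R(x)−R(y)‖_p ≤ c₂‖x−y‖_p with 0 < c₁ ≤ c₂ < 1. Then for 0 < δ ≤ c₁/2 and φ with Lip(φ) ≤ δ, ‖φ‖_∞ ≤ δ, the map T = R + φ satisfies ‖Tⁿ(x) − Tⁿ(y)‖_p = ‖Rⁿ(x) − Rⁿ(y)‖_p for all x, y ∈ ℤ_p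 and all n ∈ ℕ. -/
theorem scaling_perturbation_iterates (p : ℕ) [Fact p.Prime]
    (R φ : ℤ_[p] → ℤ_[p]) (c₁ c₂ : ℝ)
    (hc₁ : 0 < c₁) (hc₁₂ : c₁ ≤ c₂) (hc₂ : c₂ < 1)
    (hR : ∀ x y : ℤ_[p], c₁ * ‖x - y‖ ≤ ‖R x - R y‖ ∧ ‖R x - R y‖ ≤ c₂ * ‖x - y‖)
    (κ : ℝ → ℝ)
    (hκval : ∀ r : ℝ, (∃ n : ℤ, r = (p : ℝ) ^ n) → ∃ m : ℤ, κ r = (p : ℝ) ^ m)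
    (hscal : ∀ x y : ℤ_[p], x ≠ y → ‖R x - R y‖ = κ ‖x - y‖)
    (δ : ℝ) (hδ0 : 0 < δ) (hδ : δ ≤ c₁ / 2)
    (hφlip : ∀ x y : ℤ_[p], ‖φ x - φ y‖ ≤ δ * ‖x - y‖)
    (hφbd : ∀ x : ℤ_[p], ‖φ x‖ ≤ δ) :
    ∀ (n : ℕ) (x y : ℤ_[p]),
      ‖(fun z : ℤ_[p] => R z + φ z)^[n] x - (fun z : ℤ_[p] => R z + φ z)^[n] y‖ =
        ‖R^[n] x - R^[n] y‖ := by
  intro n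
  induction n with
  | zero => intro x y; simp
  | succ n ih =>
    intro x y
    simp only [Function.iterate_succ_apply']
    set a := (fun z : ℤ_[p] => R z + φ z)^[n] x
    set b := (fun z : ℤ_[p] => R z + φ z)^[n] y
    set u := R^[n] x
    set v := R^[n] y
    have hIH : ‖a - b‖ = ‖u - v‖ := ih x y
    by_cases hab : a = b
    · have huv : u = v := by
        have : ‖u - v‖ = 0 := by rw [← hIH, hab, sub_self, norm_zero]
        rwa [norm_eq_zero, sub_eq_zero] at this
      simp [hab, huv]
    · have huv : u ≠ v := by
        intro h
        apply hab
        have : ‖a - b‖ = 0 := by rw [hIH, h, sub_self, norm_zero]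
        rwa [norm_eq_zero, sub_eq_zero] at this
      have habpos : 0 < ‖a - b‖ := by
        simpa [sub_eq_zero] using hab
      have hlt : ‖φ a - φ b‖ < ‖R a - R b‖ := by
        calc ‖φ a - φ b‖ ≤ δ * ‖a - b‖ := hφlip a b
          _ < c₁ * ‖a - b‖ := by
              apply mul_lt_mul_of_pos_right _ habpos
              linarith
          _ ≤ ‖R a - R b‖ := (hR a b).1
      have key : ‖R a + φ a - (R b + φ b)‖ = ‖R a - R b‖ := by
        have : R a + φ a - (R b + φ b) = (R a - R b) + (φ a - φ b) := by ring
        rw [this, PadicInt.norm_add_eq_max_of_ne hlt.ne',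
          max_eq_left hlt.le]
      rw [key, hscal a b hab, hIH, ← hscal u v huv]
end

section
/- Let R : ℤ_p → ℤ_p be an injective contraction (Lipschitz constant < 1) with left inverse L (L ∘ R = id, L continuous on R(ℤ_p)), and set U := ℤ_p \ R(ℤ_p), B_R := ℤ_p \ ⋃_{n≥0} Rⁿ(U). Then the sets B_R and Rⁿ(U) for n ∈ ℕ form a partition of ℤ_p; moreover Rⁿ(U) = Rⁿ(ℤ_p) \ R^{n+1}(ℤ_p) for every n, the restriction R : B_R → B_R is a bijection, and the unique fixed point of R lies in B_R. -/
theorem contraction_domain_partition (p : ℕ) [Fact p.Prime]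
    (R L : ℤ_[p] → ℤ_[p]) (c : ℝ) (hc : c < 1)
    (hRlip : ∀ x y : ℤ_[p], ‖R x - R y‖ ≤ c * ‖x - y‖)
    (hRinj : Function.Injective R)
    (hLR : ∀ x : ℤ_[p], L (R x) = x)
    (hLcont : ContinuousOn L (Set.range R)) :
    (∀ n m : ℕ, n ≠ m →
      Disjoint (R^[n] '' (Set.range R)ᶜ) (R^[m] '' (Set.range R)ᶜ)) ∧
    ((⋃ n : ℕ, R^[n] '' (Set.range R)ᶜ)ᶜ ∪ ⋃ n : ℕ, R^[n] '' (Set.range R)ᶜ = Set.univ) ∧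
    (∀ n : ℕ, R^[n] '' (Set.range R)ᶜ = Set.range R^[n] \ Set.range R^[n + 1]) ∧
    Set.BijOn R ((⋃ n : ℕ, R^[n] '' (Set.range R)ᶜ)ᶜ)
      ((⋃ n : ℕ, R^[n] '' (Set.range R)ᶜ)ᶜ) ∧
    (∀ x : ℤ_[p], R x = x → x ∈ (⋃ n : ℕ, R^[n] '' (Set.range R)ᶜ)ᶜ) := by
  have hinjn : ∀ n : ℕ, Function.Injective (R^[n]) := fun n => hRinj.iterate n
  have keyn : ∀ n : ℕ, R^[n] '' (Set.range R)ᶜ = Set.range R^[n] \ Set.range R^[n + 1] := by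
    intro n
    have h1 : R^[n] '' (Set.range R) = Set.range (R^[n + 1]) := by
      rw [Function.iterate_succ, Set.range_comp]
    rw [Set.compl_eq_univ_diff, Set.image_diff (hinjn n), Set.image_univ, h1]
  have hsub : ∀ n m : ℕ, n ≤ m → Set.range (R^[m]) ⊆ Set.range (R^[n]) := by
    rintro n m hnm y ⟨z, hz⟩
    refine ⟨R^[m - n] z, ?_⟩
    rw [← Function.iterate_add_apply, Nat.add_sub_cancel' hnm, hz]
  have hdisj : ∀ n m : ℕ, n < m →
      Disjoint (R^[n] '' (Set.range R)ᶜ) (R^[m] '' (Set.range R)ᶜ) := by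
    intro n m hnm
    rw [Set.disjoint_left]
    intro x hx hx'
    rw [keyn n] at hx
    rw [keyn m] at hx'
    exact hx.2 (hsub (n + 1) m hnm hx'.1)
  have hB : (⋃ n : ℕ, R^[n] '' (Set.range R)ᶜ)ᶜ = ⋂ n : ℕ, Set.range (R^[n]) := by
    ext x
    simp only [Set.mem_compl_iff, Set.mem_iUnion, Set.mem_iInter, not_exists]
    constructor
    · intro h n
      induction n with
      | zero => exact ⟨x, rfl⟩
      | succ k ih =>
        have hk := h k
        rw [keyn k] at hk
        by_contra hx
        exact hk ⟨ih, hx⟩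
    · intro h n
      rw [keyn n]
      rintro ⟨_, h2⟩
      exact h2 (h (n + 1))
  refine ⟨?_, ?_, keyn, ?_, ?_⟩
  · intro n m hnm
    rcases lt_or_gt_of_ne hnm with h | h
    · exact hdisj n m h
    · exact (hdisj m n h).symm
  · exact Set.compl_union_self _
  · rw [hB]
    refine ⟨?_, fun a _ b _ hab => hRinj hab, ?_⟩
    · intro x hx
      simp only [Set.mem_iInter] at hx ⊢
      intro n
      cases n with
      | zero => exact ⟨R x, rfl⟩
      | succ k =>
        obtain ⟨z, hz⟩ := hx k
        exact ⟨z, by rw [Function.iterate_succ_apply', hz]⟩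
    · intro y hy
      simp only [Set.mem_iInter] at hy
      obtain ⟨x, hx⟩ := hy 1
      rw [Function.iterate_one] at hx
      refine ⟨x, ?_, hx⟩
      simp only [Set.mem_iInter]
      intro n
      obtain ⟨z, hz⟩ := hy (n + 1)
      rw [Function.iterate_succ_apply'] at hz
      exact ⟨z, hRinj (by rw [hz, hx])⟩
  · intro x hx
    rw [hB]
    simp only [Set.mem_iInter]
    exact fun n => ⟨x, Function.iterate_fixed hx n⟩
end

section
/- Let R, T : ℤ_p → ℤ_p both satisfy the bi-Lipschitz inequality c₁·‖x−y‖_p ≤ ‖F(x)−F(y)‖_p ≤ c₂·‖x−y‖_p (F ∈ {R,T}) with 0 < c₁ ≤ c₂ < 1 and with the same image R(ℤ_p) = T(ℤ_p). Let U := ℤ_p \ R(ℤ_p), and define h₁ on A_T := ⋃_{n≥0} Tⁿ(U) by h₁(Tⁿ(u)) := Rⁿ(u) for u ∈ U, n ∈ ℕ. Then h₁ is a well-defined bijection from A_T onto A_R := ⋃_{n≥0} Rⁿ(U), and R ∘ h₁ = h₁ ∘ T on A_T. -/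
theorem conjugation_on_A (p : ℕ) [Fact p.Prime]
    (R T : ℤ_[p] → ℤ_[p]) (c₁ c₂ : ℝ)
    (hc₁ : 0 < c₁) (hc₁₂ : c₁ ≤ c₂) (hc₂ : c₂ < 1)
    (hR : ∀ x y : ℤ_[p], c₁ * ‖x - y‖ ≤ ‖R x - R y‖ ∧ ‖R x - R y‖ ≤ c₂ * ‖x - y‖)
    (hT : ∀ x y : ℤ_[p], c₁ * ‖x - y‖ ≤ ‖T x - T y‖ ∧ ‖T x - T y‖ ≤ c₂ * ‖x - y‖)
    (hrange : Set.range R = Set.range T) :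
    ∃ h₁ : ℤ_[p] → ℤ_[p],
      (∀ u ∈ (Set.range R)ᶜ, ∀ n : ℕ, h₁ (T^[n] u) = R^[n] u) ∧
      Set.BijOn h₁ (⋃ n : ℕ, T^[n] '' (Set.range R)ᶜ)
        (⋃ n : ℕ, R^[n] '' (Set.range R)ᶜ) ∧
      (∀ x ∈ ⋃ n : ℕ, T^[n] '' (Set.range R)ᶜ, R (h₁ x) = h₁ (T x)) := by
  classical
  set U := (Set.range R)ᶜ with hU
  -- injectivity
  have hinj : ∀ (F : ℤ_[p] → ℤ_[p]),
      (∀ x y : ℤ_[p], c₁ * ‖x - y‖ ≤ ‖F x - F y‖ ∧ ‖F x - F y‖ ≤ c₂ * ‖x - y‖) →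
      Function.Injective F := by
    intro F hF x y hxy
    have h := (hF x y).1
    rw [hxy, sub_self, norm_zero] at h
    have : ‖x - y‖ = 0 := by nlinarith [norm_nonneg (x - y)]
    have := sub_eq_zero.mp (norm_eq_zero.mp this)
    exact this
  have hTinj := hinj T hT
  have hRinj := hinj R hR
  -- uniqueness of representation
  have keyF : ∀ (F : ℤ_[p] → ℤ_[p]), Function.Injective F → Set.range F = Set.range T →
      ∀ (n m : ℕ) (u v : ℤ_[p]), u ∈ U → v ∈ U → F^[n] u = F^[m] v → n = m ∧ u = v := by
    intro F hFinj hFr n m u v hu hv heq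
    have main : ∀ (n m : ℕ) (u v : ℤ_[p]), u ∈ U → v ∈ U → n ≤ m →
        F^[n] u = F^[m] v → n = m ∧ u = v := by
      intro n m u v hu hv hnm heq
      obtain ⟨k, rfl⟩ := Nat.exists_eq_add_of_le hnm
      rw [Function.iterate_add_apply] at heq
      have huv : u = F^[k] v := hFinj.iterate n heq
      rcases Nat.eq_zero_or_pos k with hk | hk
      · subst hk; simp at huv; exact ⟨by omega, huv⟩
      · exfalso
        apply hu
        have : u ∈ Set.range F :=
          ⟨F^[k-1] v, by rw [huv, ← Function.iterate_succ_apply' F, show (k-1).succ = k by omega]⟩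
        rwa [hFr, ← hrange] at this
    rcases le_total n m with h | h
    · exact main n m u v hu hv h heq
    · obtain ⟨h1, h2⟩ := main m n v u hv hu h heq.symm
      exact ⟨h1.symm, h2.symm⟩
  have keyT := keyF T hTinj rfl
  have keyR := keyF R hRinj hrange
  -- define h₁
  set P : ℤ_[p] → ℕ × ℤ_[p] → Prop := fun x q => q.2 ∈ U ∧ T^[q.1] q.2 = x with hP
  set h₁ : ℤ_[p] → ℤ_[p] := fun x =>
    if h : ∃ q : ℕ × ℤ_[p], P x q then R^[h.choose.1] h.choose.2 else x with hh₁
  have hspec : ∀ u ∈ U, ∀ n : ℕ, h₁ (T^[n] u) = R^[n] u := by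
    intro u hu n
    have hex : ∃ q : ℕ × ℤ_[p], P (T^[n] u) q := ⟨(n, u), hu, rfl⟩
    rw [hh₁]
    simp only [dif_pos hex]
    obtain ⟨hv, heq⟩ := hex.choose_spec
    obtain ⟨h1, h2⟩ := keyT _ _ _ _ hv hu heq
    rw [h1, h2]
  refine ⟨h₁, hspec, ⟨?_, ?_, ?_⟩, ?_⟩
  · rintro x hx
    simp only [Set.mem_iUnion, Set.mem_image] at hx ⊢
    obtain ⟨n, u, hu, rfl⟩ := hx
    exact ⟨n, u, hu, (hspec u hu n).symm⟩
  · rintro x hx y hy hxy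
    simp only [Set.mem_iUnion, Set.mem_image] at hx hy
    obtain ⟨n, u, hu, rfl⟩ := hx
    obtain ⟨m, v, hv, rfl⟩ := hy
    rw [hspec u hu n, hspec v hv m] at hxy
    obtain ⟨h1, h2⟩ := keyR _ _ _ _ hu hv hxy
    rw [h1, h2]
  · rintro y hy
    simp only [Set.mem_iUnion, Set.mem_image] at hy
    obtain ⟨n, u, hu, rfl⟩ := hy
    refine ⟨T^[n] u, ?_, hspec u hu n⟩
    simp only [Set.mem_iUnion, Set.mem_image]
    exact ⟨n, u, hu, rfl⟩
  · intro x hx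
    simp only [Set.mem_iUnion, Set.mem_image] at hx
    obtain ⟨n, u, hu, rfl⟩ := hx
    rw [hspec u hu n, ← Function.iterate_succ_apply' T, hspec u hu (n+1),
      Function.iterate_succ_apply' R]
end

section
/- Let R, T : ℤ_p → ℤ_p satisfy c₁‖x−y‖_p ≤ ‖F(x)−F(y)‖_p ≤ c₂‖x−y‖_p for F ∈ {R,T} with 0 < c₁ ≤ c₂ < 1, ‖R − T‖_∞ ≤ δ, and R(ℤ_p) = T(ℤ_p). Write x = Tⁿ(u) with u ∉ T(ℤ_p) and define h₁(x) := Rⁿ(u). Then ‖h₁(x) − x‖_p ≤ δ for all such x. -/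
theorem conjugation_close_to_identity (p : ℕ) [Fact p.Prime]
    (R T : ℤ_[p] → ℤ_[p]) (c₁ c₂ δ : ℝ)
    (hc₁ : 0 < c₁) (hc₁₂ : c₁ ≤ c₂) (hc₂ : c₂ < 1)
    (hR : ∀ x y : ℤ_[p], c₁ * ‖x - y‖ ≤ ‖R x - R y‖ ∧ ‖R x - R y‖ ≤ c₂ * ‖x - y‖)
    (hT : ∀ x y : ℤ_[p], c₁ * ‖x - y‖ ≤ ‖T x - T y‖ ∧ ‖T x - T y‖ ≤ c₂ * ‖x - y‖)
    (hclose : ∀ x : ℤ_[p], ‖R x - T x‖ ≤ δ)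
    (hrange : Set.range R = Set.range T) :
    ∀ (n : ℕ) (u : ℤ_[p]), u ∉ Set.range T → ‖R^[n] u - T^[n] u‖ ≤ δ := by
  have hδ : 0 ≤ δ := le_trans (norm_nonneg _) (hclose 0)
  intro n u _
  induction n with
  | zero => simpa using hδ
  | succ n ih =>
      rw [Function.iterate_succ_apply', Function.iterate_succ_apply']
      have key : R (R^[n] u) - T (T^[n] u) =
          (R (R^[n] u) - R (T^[n] u)) + (R (T^[n] u) - T (T^[n] u)) := by ring
      rw [key]
      refine le_trans (PadicInt.nonarchimedean _ _) (max_le ?_ (hclose _))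
      calc ‖R (R^[n] u) - R (T^[n] u)‖ ≤ c₂ * ‖R^[n] u - T^[n] u‖ := (hR _ _).2
        _ ≤ 1 * δ := by
            apply mul_le_mul hc₂.le ih (norm_nonneg _) zero_le_one
        _ = δ := one_mul δ
end

section
/- Let R : ℤ_p → ℤ_p be defined by R(Σ_{i≥0} a_i pⁱ) := Σ_{i≥0} a_i p^{2i+1}, where a_i ∈ {0,…,p−1} are the p-adic digits. Then R is an injective contraction (Lip(R) ≤ 1/p), the map L(Σ_{i≥0} x_i pⁱ) := Σ_{i≥0} x_{2i+1} pⁱ satisfies L ∘ R = id, but R does not satisfy any lower bi-Lipschitz bound: there is no constant c₁ > 0 with c₁·‖x−y‖_p ≤ ‖R(x)−R(y)‖_p for all x, y ∈ ℤ_p. -/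
/-!
Writing `x = ∑ aᵢ pⁱ`, two digit sequences agree below position `n` exactly when the
corresponding `p`-adic integers are congruent modulo `pⁿ`. The map `R` moves digit `i` to
position `2i + 1`, so agreement below `n` becomes agreement below `2n + 1 ≥ n + 1`: this is
the `1/p`-contraction, and reading off the odd digits undoes `R`. But `R (pᵐ) = p^(2m+1)`, so
`‖R (pᵐ) - R 0‖ / ‖pᵐ‖ = p^(-(m+1))` tends to `0`.
-/

open Filter Function Topology

theorem Function.extend_zero_lt {α β : Type*} {g : α → β} {a : α → ℕ} {b : ℕ} (hb : 0 < b)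
    (ha : ∀ i, a i < b) (j : β) : extend g a 0 j < b := by
  classical
  rw [extend_def]
  split_ifs
  exacts [ha _, hb]

theorem Function.extend_zero_eq_of_lt {g : ℕ → ℕ} (hg : StrictMono g) {a b : ℕ → ℕ} {n : ℕ}
    (h : ∀ i < n, a i = b i) : ∀ j < g n, extend g a 0 j = extend g b 0 j := by
  intro j hj
  by_cases hjg : ∃ i, g i = j
  · obtain ⟨i, rfl⟩ := hjg
    rw [hg.injective.extend_apply, hg.injective.extend_apply]
    exact h i (hg.lt_iff_lt.1 hj)
  · rw [extend_apply' _ _ _ hjg, extend_apply' _ _ _ hjg]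

namespace PadicInt

variable {p : ℕ} [hp : Fact p.Prime]

variable (p) in
noncomputable def ofDigits (a : ℕ → ℕ) : ℤ_[p] := ∑' i, (a i : ℤ_[p]) * (p : ℤ_[p]) ^ i

variable (p) in
theorem tendsto_zpow_neg_natCast :
    Tendsto (fun n : ℕ => (p : ℝ) ^ (-(n : ℤ))) atTop (𝓝 0) := by
  simp only [zpow_neg, zpow_natCast]
  exact tendsto_inv_atTop_zero.comp
    (tendsto_pow_atTop_atTop_of_one_lt (by exact_mod_cast hp.out.one_lt))

theorem norm_mul_p_pow_le (c : ℤ_[p]) (n : ℕ) : ‖c * (p : ℤ_[p]) ^ n‖ ≤ (p : ℝ) ^ (-(n : ℤ)) := by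
  rw [norm_mul, norm_p_pow]
  exact mul_le_of_le_one_left (by positivity) (norm_le_one c)

theorem summable_mul_p_pow (c : ℕ → ℤ_[p]) : Summable fun i => c i * (p : ℤ_[p]) ^ i := by
  refine NonarchimedeanAddGroup.summable_of_tendsto_cofinite_zero ?_
  rw [Nat.cofinite_eq_atTop]
  exact squeeze_zero_norm (fun i => norm_mul_p_pow_le (c i) i) (tendsto_zpow_neg_natCast p)

theorem norm_tsum_mul_p_pow_le {c : ℕ → ℤ_[p]} {n : ℕ} (hc : ∀ i < n, c i = 0) :
    ‖∑' i, c i * (p : ℤ_[p]) ^ i‖ ≤ (p : ℝ) ^ (-(n : ℤ)) := by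
  refine IsUltrametricDist.norm_tsum_le_of_forall_le_of_nonneg (by positivity) fun i => ?_
  rcases lt_or_ge i n with hi | hi
  · rw [hc i hi, zero_mul, norm_zero]
    positivity
  · refine (norm_mul_p_pow_le _ _).trans (zpow_le_zpow_right₀ ?_ (by omega))
    exact_mod_cast hp.out.one_lt.le

theorem ofDigits_eq_add (a : ℕ → ℕ) :
    ofDigits p a = a 0 + p * ofDigits p fun i => a (i + 1) := by
  rw [ofDigits, (summable_mul_p_pow _).tsum_eq_zero_add, ofDigits,
    ← (summable_mul_p_pow _).tsum_mul_left]
  simp only [pow_zero, mul_one, pow_succ]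
  congr 1
  exact tsum_congr fun i => by ring

theorem norm_ofDigits_sub_le {a b : ℕ → ℕ} {n : ℕ} (h : ∀ i < n, a i = b i) :
    ‖ofDigits p a - ofDigits p b‖ ≤ (p : ℝ) ^ (-(n : ℤ)) := by
  rw [ofDigits, ofDigits, ← (summable_mul_p_pow _).tsum_sub (summable_mul_p_pow _)]
  simp only [← sub_mul]
  exact norm_tsum_mul_p_pow_le fun i hi => by rw [h i hi, sub_self]

theorem natCast_eq_of_p_dvd_sub {m n : ℕ} (hm : m < p) (hn : n < p) {y z : ℤ_[p]}
    (h : (p : ℤ_[p]) ∣ (m + p * y) - (n + p * z)) : m = n := by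
  have hdvd : (p : ℤ) ∣ (m - n : ℤ) := by
    rw [← norm_int_lt_one_iff_dvd, norm_lt_one_iff_dvd]
    convert h.sub (dvd_mul_right (p : ℤ_[p]) (y - z)) using 1
    push_cast
    ring
  have := Int.eq_zero_of_abs_lt_dvd hdvd (by rw [abs_lt]; omega)
  omega

theorem eq_of_pow_dvd_ofDigits_sub {a b : ℕ → ℕ} (ha : ∀ i, a i < p) (hb : ∀ i, b i < p)
    {n : ℕ} (h : (p : ℤ_[p]) ^ n ∣ ofDigits p a - ofDigits p b) : ∀ i < n, a i = b i := by
  induction n generalizing a b with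
  | zero => intro i hi; omega
  | succ n ih =>
    rw [ofDigits_eq_add a, ofDigits_eq_add b] at h
    have h0 : a 0 = b 0 :=
      natCast_eq_of_p_dvd_sub (ha 0) (hb 0) ((dvd_pow_self _ n.succ_ne_zero).trans h)
    rw [h0, add_sub_add_left_eq_sub, ← mul_sub, pow_succ', mul_dvd_mul_iff_left] at h
    · have htail := ih (fun i => ha (i + 1)) (fun i => hb (i + 1)) h
      rintro (_ | i) hi
      exacts [h0, htail i (by omega)]
    · exact_mod_cast hp.out.ne_zero

theorem exists_ofDigits (x : ℤ_[p]) : ∃ a : ℕ → ℕ, (∀ i, a i < p) ∧ ofDigits p a = x := by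
  have hstep (y : ℤ_[p]) : ∃ z, y - y.zmodRepr = p * z :=
    (norm_lt_one_iff_dvd _).1 (norm_sub_zmodRepr_lt_one y)
  -- the digits are the residues mod `p` of the successive quotients `x, (x - a₀) / p, …`
  choose tail htail using hstep
  set xs : ℕ → ℤ_[p] := fun k => tail^[k] x
  refine ⟨fun k => (xs k).zmodRepr, fun k => zmodRepr_lt_p _, ?_⟩
  have hpartial (n : ℕ) :
      x - ∑ i ∈ Finset.range n, ((xs i).zmodRepr : ℤ_[p]) * p ^ i = p ^ n * xs n := by
    induction n with
    | zero => simp [xs]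
    | succ n ih =>
      rw [Finset.sum_range_succ, ← sub_sub, ih, show xs (n + 1) = tail (xs n) from
        iterate_succ_apply' _ _ _, pow_succ, mul_assoc, ← htail]
      ring
  refine tendsto_nhds_unique (summable_mul_p_pow _).hasSum.tendsto_sum_nat ?_
  rw [tendsto_iff_norm_sub_tendsto_zero]
  refine squeeze_zero (fun n => norm_nonneg _) (fun n => ?_) (tendsto_zpow_neg_natCast p)
  rw [norm_sub_rev, hpartial, mul_comm]
  exact norm_mul_p_pow_le _ _

theorem ofDigits_extend {g : ℕ → ℕ} (hg : Injective g) (a : ℕ → ℕ) :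
    ofDigits p (extend g a 0) = ∑' i, (a i : ℤ_[p]) * (p : ℤ_[p]) ^ g i := by
  rw [ofDigits, ← hg.tsum_eq]
  · simp only [hg.extend_apply]
  · refine support_subset_iff'.2 fun j hj => ?_
    rw [extend_apply' _ _ _ hj, Pi.zero_apply, Nat.cast_zero, zero_mul]

theorem ofDigits_single (m : ℕ) : ofDigits p (Pi.single m 1) = (p : ℤ_[p]) ^ m := by
  rw [ofDigits, tsum_eq_single m fun i hi => by simp [hi]]
  simp

section Spreading

variable {R : ℤ_[p] → ℤ_[p]} {g : ℕ → ℕ}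

theorem norm_map_ofDigits_sub_le (hg : StrictMono g)
    (hR : ∀ a, (∀ i, a i < p) → R (ofDigits p a) = ofDigits p (extend g a 0))
    {a b : ℕ → ℕ} (ha : ∀ i, a i < p) (hb : ∀ i, b i < p) {n : ℕ} (h : ∀ i < n, a i = b i) :
    ‖R (ofDigits p a) - R (ofDigits p b)‖ ≤ (p : ℝ) ^ (-(g n : ℤ)) := by
  rw [hR a ha, hR b hb]
  exact norm_ofDigits_sub_le (extend_zero_eq_of_lt hg h)

theorem norm_map_sub_le (hg : StrictMono g) (hgn : ∀ n, n < g n)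
    (hR : ∀ a, (∀ i, a i < p) → R (ofDigits p a) = ofDigits p (extend g a 0)) (x y : ℤ_[p]) :
    ‖R x - R y‖ ≤ (p : ℝ)⁻¹ * ‖x - y‖ := by
  rcases eq_or_ne x y with rfl | hxy
  · simp
  have hne := sub_ne_zero.2 hxy
  obtain ⟨a, ha, rfl⟩ := exists_ofDigits x
  obtain ⟨b, hb, rfl⟩ := exists_ofDigits y
  set n := (ofDigits p a - ofDigits p b).valuation
  have hab := eq_of_pow_dvd_ofDigits_sub ha hb (Dvd.intro_left _ (unitCoeff_spec hne).symm)
  calc ‖R (ofDigits p a) - R (ofDigits p b)‖ ≤ (p : ℝ) ^ (-(g n : ℤ)) :=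
        norm_map_ofDigits_sub_le hg hR ha hb hab
    _ ≤ (p : ℝ) ^ (-1 + -(n : ℤ)) :=
        zpow_le_zpow_right₀ (by exact_mod_cast hp.out.one_lt.le) (by have := hgn n; omega)
    _ = (p : ℝ)⁻¹ * ‖ofDigits p a - ofDigits p b‖ := by
        rw [norm_eq_zpow_neg_valuation hne, zpow_add₀ (by exact_mod_cast hp.out.ne_zero),
          zpow_neg_one]

theorem not_exists_mul_norm_sub_le
    (hR : ∀ a, (∀ i, a i < p) → R (ofDigits p a) = ofDigits p (extend (fun i => 2 * i + 1) a 0)) :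
    ¬ ∃ c > (0 : ℝ), ∀ x y : ℤ_[p], c * ‖x - y‖ ≤ ‖R x - R y‖ := by
  rintro ⟨c, hc, hcR⟩
  obtain ⟨m, hm⟩ := ((tendsto_zpow_neg_natCast p).eventually (gt_mem_nhds hc)).exists
  have hsingle (i : ℕ) : (Pi.single m 1 : ℕ → ℕ) i < p := by
    rw [Pi.single_apply]
    split_ifs
    exacts [hp.out.one_lt, hp.out.pos]
  have hupper := norm_map_ofDigits_sub_le (fun i j hij => by omega) hR hsingle
    (b := 0) (fun _ => hp.out.pos) (n := m) fun i hi => Pi.single_eq_of_ne hi.ne _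
  have hzero : ofDigits p 0 = 0 := by simp [ofDigits]
  have hlower := hcR (ofDigits p (Pi.single m 1)) (ofDigits p 0)
  rw [ofDigits_single, hzero] at hupper hlower
  rw [sub_zero, norm_p_pow] at hlower
  have hp0 : (p : ℝ) ≠ 0 := by exact_mod_cast hp.out.ne_zero
  refine lt_irrefl (c * (p : ℝ) ^ (-(m : ℤ))) ?_
  calc c * (p : ℝ) ^ (-(m : ℤ)) ≤ ‖R ((p : ℤ_[p]) ^ m) - R 0‖ := hlower
    _ ≤ (p : ℝ) ^ (-((2 * m + 1 : ℕ) : ℤ)) := hupper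
    _ ≤ (p : ℝ) ^ (-(m : ℤ) + -(m : ℤ)) :=
        zpow_le_zpow_right₀ (by exact_mod_cast hp.out.one_lt.le) (by omega)
    _ = (p : ℝ) ^ (-(m : ℤ)) * (p : ℝ) ^ (-(m : ℤ)) := zpow_add₀ hp0 _ _
    _ < c * (p : ℝ) ^ (-(m : ℤ)) := mul_lt_mul_of_pos_right hm (zpow_pos (by positivity) _)

end Spreading

end PadicInt

open PadicInt

theorem digit_spreading_contraction_not_biLipschitz (p : ℕ) [Fact p.Prime]
    (R L : ℤ_[p] → ℤ_[p])
    (hRdef : ∀ a : ℕ → ℕ, (∀ i, a i < p) →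
      R (∑' i : ℕ, (a i : ℤ_[p]) * (p : ℤ_[p]) ^ i) =
        ∑' i : ℕ, (a i : ℤ_[p]) * (p : ℤ_[p]) ^ (2 * i + 1))
    (hLdef : ∀ a : ℕ → ℕ, (∀ i, a i < p) →
      L (∑' i : ℕ, (a i : ℤ_[p]) * (p : ℤ_[p]) ^ i) =
        ∑' i : ℕ, (a (2 * i + 1) : ℤ_[p]) * (p : ℤ_[p]) ^ i) :
    Function.Injective R ∧
    (∀ x y : ℤ_[p], ‖R x - R y‖ ≤ (1 / p) * ‖x - y‖) ∧
    (∀ x : ℤ_[p], L (R x) = x) ∧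
    ¬ ∃ c₁ > (0 : ℝ), ∀ x y : ℤ_[p], c₁ * ‖x - y‖ ≤ ‖R x - R y‖ := by
  have hg : StrictMono fun i : ℕ => 2 * i + 1 := fun i j hij => by dsimp only; omega
  have hR (a : ℕ → ℕ) (ha : ∀ i, a i < p) :
      R (ofDigits p a) = ofDigits p (extend (fun i => 2 * i + 1) a 0) :=
    (hRdef a ha).trans (ofDigits_extend hg.injective a).symm
  have hLR : LeftInverse L R := fun x => by
    obtain ⟨a, ha, rfl⟩ := exists_ofDigits x
    rw [hR a ha]
    refine (hLdef _ (extend_zero_lt (Fact.out : p.Prime).pos ha)).trans ?_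
    simp only [hg.injective.extend_apply]
    rfl
  refine ⟨hLR.injective, fun x y => ?_, hLR, not_exists_mul_norm_sub_le hR⟩
  rw [one_div]
  exact norm_map_sub_le hg (fun n => by omega) hR x y
end

section
/- Let f : ℤ_p → ℤ_p be a continuous nowhere locally constant map, let δ > 0, let (x_n)_{n∈ℕ} be a δ-pseudo-orbit of f, and let 0 < ρ < δ. Then there exists a sequence (z_n)_{n∈ℕ} in ℤ_p with pairwise distinct terms such that: ‖x_n − z_n‖_p < ρ for every n; the sequence (f(z_n))_{n∈ℕ} has pairwise distinct terms; and ‖z_{n+1} − f(z_n)‖_p < δ + 2ρ for all n ∈ ℕ. -/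
open Metric Set

lemma image_ball_infinite (p : ℕ) [Fact p.Prime]
    (f : ℤ_[p] → ℤ_[p]) (hf : Continuous f)
    (hnlc : ∀ x : ℤ_[p], ∀ ε > (0 : ℝ), ¬ ∃ c : ℤ_[p], ∀ z : ℤ_[p], ‖z - x‖ ≤ ε → f z = c)
    (x : ℤ_[p]) (ε : ℝ) (hε : 0 < ε) :
    (f '' Metric.closedBall x ε).Infinite := by
  by_contra h
  rw [Set.not_infinite] at h
  have hScl : IsClosed (Metric.closedBall x ε : Set ℤ_[p]) := Metric.isClosed_closedBall
  haveI : CompleteSpace (Metric.closedBall x ε : Set ℤ_[p]) := hScl.completeSpace_coe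
  haveI : Nonempty (Metric.closedBall x ε : Set ℤ_[p]) := ⟨⟨x, Metric.mem_closedBall_self hε.le⟩⟩
  have hcover : (⋃ c : h.toFinset, {y : (Metric.closedBall x ε : Set ℤ_[p]) | f y = (c : ℤ_[p])}) = Set.univ := by
    ext y
    simp only [Set.mem_iUnion, Set.mem_setOf_eq, Set.mem_univ, iff_true]
    have : f (y : ℤ_[p]) ∈ h.toFinset := by
      rw [Set.Finite.mem_toFinset]
      exact ⟨(y : ℤ_[p]), y.2, rfl⟩
    exact ⟨⟨f y, this⟩, rfl⟩
  have hclosed : ∀ c : h.toFinset, IsClosed {y : (Metric.closedBall x ε : Set ℤ_[p]) | f y = (c : ℤ_[p])} :=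
    fun c => isClosed_eq (hf.comp continuous_subtype_val) continuous_const
  obtain ⟨c, y, hy⟩ := nonempty_interior_of_iUnion_of_closed hclosed hcover
  rw [mem_interior_iff_mem_nhds, Metric.mem_nhds_iff] at hy
  obtain ⟨r, hr, hball⟩ := hy
  refine hnlc (y : ℤ_[p]) (min (r / 2) ε) (lt_min (by linarith) hε) ⟨c, ?_⟩
  intro z hz
  have hzS : z ∈ Metric.closedBall x ε := by
    have h1 : ‖z - x‖ ≤ max ‖z - (y : ℤ_[p])‖ ‖(y : ℤ_[p]) - x‖ := by
      have := PadicInt.nonarchimedean (z - (y : ℤ_[p])) ((y : ℤ_[p]) - x)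
      simpa using this
    have h2 : ‖(y : ℤ_[p]) - x‖ ≤ ε := by
      have hy2 := y.2
      rwa [Metric.mem_closedBall, dist_eq_norm] at hy2
    rw [Metric.mem_closedBall, dist_eq_norm]
    exact h1.trans (max_le (hz.trans (min_le_right _ _)) h2)
  have : (⟨z, hzS⟩ : (Metric.closedBall x ε : Set ℤ_[p])) ∈ Metric.ball y r := by
    rw [Metric.mem_ball, Subtype.dist_eq, dist_eq_norm]
    calc ‖z - (y : ℤ_[p])‖ ≤ min (r / 2) ε := hz
      _ ≤ r / 2 := min_le_left _ _
      _ < r := by linarith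
  exact hball this

theorem proper_pseudo_orbit_approximation (p : ℕ) [Fact p.Prime]
    (f : ℤ_[p] → ℤ_[p]) (hf : Continuous f)
    (hnlc : ∀ x : ℤ_[p], ∀ ε > (0 : ℝ), ¬ ∃ c : ℤ_[p], ∀ z : ℤ_[p], ‖z - x‖ ≤ ε → f z = c)
    (δ : ℝ) (hδ : 0 < δ) (x : ℕ → ℤ_[p])
    (hpseudo : ∀ n : ℕ, ‖f (x n) - x (n + 1)‖ ≤ δ)
    (ρ : ℝ) (hρ0 : 0 < ρ) (hρδ : ρ < δ) :
    ∃ z : ℕ → ℤ_[p], Function.Injective z ∧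
      (∀ n : ℕ, ‖x n - z n‖ < ρ) ∧
      Function.Injective (fun n : ℕ => f (z n)) ∧
      (∀ n : ℕ, ‖z (n + 1) - f (z n)‖ < δ + 2 * ρ) := by
  classical
  -- Key step: for each n and finite set s, find w close to x n with f w close to f (x n)
  -- and f w outside s.
  have key : ∀ (n : ℕ) (s : Finset ℤ_[p]), ∃ w : ℤ_[p],
      ‖x n - w‖ < ρ ∧ ‖f (x n) - f w‖ < ρ ∧ f w ∉ s := by
    intro n s
    obtain ⟨ε, hε, hcont⟩ := Metric.continuous_iff.mp hf (x n) ρ hρ0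
    set ε' := min (ε / 2) (ρ / 2) with hε'
    have hε'pos : 0 < ε' := lt_min (by linarith) (by linarith)
    have hinf := image_ball_infinite p f hf hnlc (x n) ε' hε'pos
    have : ((f '' Metric.closedBall (x n) ε') \ (s : Set ℤ_[p])).Infinite :=
      hinf.diff (s.finite_toSet)
    obtain ⟨v, hv⟩ := this.nonempty
    obtain ⟨⟨w, hw, rfl⟩, hvs⟩ := hv
    rw [Metric.mem_closedBall, dist_eq_norm] at hw
    refine ⟨w, ?_, ?_, hvs⟩
    · rw [norm_sub_rev]
      calc ‖w - x n‖ ≤ ε' := hw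
        _ ≤ ρ / 2 := min_le_right _ _
        _ < ρ := by linarith
    · have hd : dist w (x n) < ε := by
        rw [dist_eq_norm]
        calc ‖w - x n‖ ≤ ε' := hw
          _ ≤ ε / 2 := min_le_left _ _
          _ < ε := by linarith
      have := hcont w hd
      rwa [dist_eq_norm, norm_sub_rev] at this
  choose g hg1 hg2 hg3 using key
  -- Recursive construction carrying the set of forbidden values.
  let F : ℕ → ℤ_[p] × Finset ℤ_[p] := fun n => Nat.rec
    (⟨g 0 ∅, {f (g 0 ∅)}⟩)
    (fun k q => ⟨g (k + 1) q.2, insert (f (g (k + 1) q.2)) q.2⟩) n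
  set z : ℕ → ℤ_[p] := fun n => (F n).1 with hz
  have hFsucc : ∀ n, F (n + 1) = ⟨g (n + 1) (F n).2, insert (f (g (n + 1) (F n).2)) (F n).2⟩ :=
    fun n => rfl
  have hznval : ∀ n, z 0 = g 0 ∅ ∧ z (n + 1) = g (n + 1) (F n).2 := fun n => ⟨rfl, rfl⟩
  have hclose : ∀ n, ‖x n - z n‖ < ρ ∧ ‖f (x n) - f (z n)‖ < ρ := by
    intro n
    cases n with
    | zero => exact ⟨hg1 0 ∅, hg2 0 ∅⟩
    | succ k => exact ⟨hg1 (k + 1) (F k).2, hg2 (k + 1) (F k).2⟩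
  have hmem : ∀ n, f (z n) ∈ (F n).2 := by
    intro n
    cases n with
    | zero => exact Finset.mem_singleton_self _
    | succ k => exact Finset.mem_insert_self _ _
  have hsub : ∀ n, (F n).2 ⊆ (F (n + 1)).2 := by
    intro n
    rw [hFsucc]
    exact Finset.subset_insert _ _
  have hmono : ∀ k n, k ≤ n → (F k).2 ⊆ (F n).2 := by
    intro k n
    induction n with
    | zero => intro hkn; rw [Nat.le_zero.mp hkn]
    | succ m ih =>
      intro hkn
      rcases Nat.le_succ_iff.mp hkn with h | h
      · exact (ih h).trans (hsub m)
      · subst h; rfl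
  have hnot : ∀ n, f (z (n + 1)) ∉ (F n).2 := fun n => hg3 (n + 1) (F n).2
  have hne : ∀ k n, k < n → f (z k) ≠ f (z n) := by
    intro k n hkn
    obtain ⟨m, rfl⟩ := Nat.exists_eq_add_of_lt hkn
    intro heq
    exact hnot (k + m) (heq ▸ hmono k (k + m) (Nat.le_add_right _ _) (hmem k))
  have finj : Function.Injective (fun n : ℕ => f (z n)) := by
    intro a b hab
    simp only at hab
    rcases lt_trichotomy a b with h | h | h
    · exact absurd hab (hne a b h)
    · exact h
    · exact absurd hab.symm (hne b a h)
  refine ⟨z, ?_, fun n => (hclose n).1, finj, ?_⟩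
  · intro a b hab
    exact finj (by simp only [hab])
  · intro n
    have h1 : ‖x (n + 1) - z (n + 1)‖ < ρ := (hclose (n + 1)).1
    have h2 : ‖f (x n) - x (n + 1)‖ ≤ δ := hpseudo n
    have h3 : ‖f (x n) - f (z n)‖ < ρ := (hclose n).2
    have heq : z (n + 1) - f (z n) =
        (-(x (n + 1) - z (n + 1))) + (-(f (x n) - x (n + 1))) + (f (x n) - f (z n)) := by
      ring
    calc ‖z (n + 1) - f (z n)‖
        = ‖(-(x (n + 1) - z (n + 1))) + (-(f (x n) - x (n + 1))) + (f (x n) - f (z n))‖ := by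
          rw [heq]
      _ ≤ ‖(-(x (n + 1) - z (n + 1))) + (-(f (x n) - x (n + 1)))‖ + ‖f (x n) - f (z n)‖ :=
          norm_add_le _ _
      _ ≤ ‖-(x (n + 1) - z (n + 1))‖ + ‖-(f (x n) - x (n + 1))‖ + ‖f (x n) - f (z n)‖ := by
          have := norm_add_le (-(x (n + 1) - z (n + 1))) (-(f (x n) - x (n + 1)))
          linarith
      _ < δ + 2 * ρ := by
          rw [norm_neg, norm_neg]
          linarith
end
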